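/- arXiv:1406.2947 — 4 statements merged into one kernel-verified Lean document; each statement's English description precedes it below -/
import Mathlib

section
/- Let A1, A2, A3, A4 be four points in the Euclidean plane in convex position, and let A0 be an interior point of the quadrilateral. Suppose there exist positive weights B1 = B3 and B2 = B4 such that B1*u(A0,A1) + B2*u(A0,A2) + B3*u(A0,A3) + B4*u(A0,A4) = 0, where u(A0,Ai) denotes the unit vector from A0 to Ai. Then the angle A1-A0-A2 equals the angle A3-A0-A4, and the angle A2-A0-A3 equals the angle A4-A0-A1. -/
open EuclideanGeometry
open RealInnerProductSpace

/-!
Since `B₁ = B₃` and `B₂ = B₄`, the equilibrium condition reads `B₁ (u₁ + u₃) + B₂ (u₂ + u₄) = 0`.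
As `‖u₁‖ = ‖u₃‖`, the vectors `u₁ + u₃` and `u₁ - u₃` are orthogonal, so pairing with `u₁ - u₃`
gives `⟪u₂ + u₄, u₁ - u₃⟫ = 0`; likewise `⟪u₁ + u₃, u₂ - u₄⟫ = 0`. The sum and the difference of
these two relations are `⟪u₁, u₂⟫ = ⟪u₃, u₄⟫` and `⟪u₂, u₃⟫ = ⟪u₄, u₁⟫`, and for unit vectors the
inner product determines the angle.
-/

section InnerProduct

variable {V : Type*} [NormedAddCommGroup V] [InnerProductSpace ℝ V]

theorem inner_eq_inner_of_smul_add_add_smul_add_eq_zero {u₁ u₂ u₃ u₄ : V} {a b : ℝ}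
    (ha : a ≠ 0) (hb : b ≠ 0) (h₁₃ : ‖u₁‖ = ‖u₃‖) (h₂₄ : ‖u₂‖ = ‖u₄‖)
    (h : a • (u₁ + u₃) + b • (u₂ + u₄) = 0) :
    ⟪u₁, u₂⟫ = ⟪u₃, u₄⟫ ∧ ⟪u₂, u₃⟫ = ⟪u₄, u₁⟫ := by
  have h₁₃' : ⟪u₁ + u₃, u₁ - u₃⟫ = 0 := (real_inner_add_sub_eq_zero_iff _ _).mpr h₁₃
  have h₂₄' : ⟪u₂ + u₄, u₂ - u₄⟫ = 0 := (real_inner_add_sub_eq_zero_iff _ _).mpr h₂₄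
  have e₁ : b * ⟪u₂ + u₄, u₁ - u₃⟫ = 0 := by
    have := congrArg (⟪·, u₁ - u₃⟫) h
    simpa only [inner_add_left, real_inner_smul_left, h₁₃', mul_zero, zero_add,
      inner_zero_left] using this
  have e₂ : a * ⟪u₁ + u₃, u₂ - u₄⟫ = 0 := by
    have := congrArg (⟪·, u₂ - u₄⟫) h
    simpa only [inner_add_left, real_inner_smul_left, h₂₄', mul_zero, add_zero,
      inner_zero_left] using this
  replace e₁ := (mul_eq_zero.mp e₁).resolve_left hb
  replace e₂ := (mul_eq_zero.mp e₂).resolve_left ha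
  simp only [inner_add_left, inner_sub_right] at e₁ e₂
  rw [real_inner_comm u₁ u₂, real_inner_comm u₃ u₄] at e₁
  rw [real_inner_comm u₂ u₃, real_inner_comm u₄ u₁] at e₂
  constructor <;> linarith

namespace InnerProductGeometry

theorem angle_eq_angle_of_inner_eq {x y x' y' : V} (hx : ‖x‖ = ‖x'‖) (hy : ‖y‖ = ‖y'‖)
    (h : ⟪x, y⟫ = ⟪x', y'⟫) : angle x y = angle x' y' := by
  rw [angle, angle, hx, hy, h]

theorem angle_inv_norm_smul_inv_norm_smul {x y : V} (hx : x ≠ 0) (hy : y ≠ 0) :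
    angle (‖x‖⁻¹ • x) (‖y‖⁻¹ • y) = angle x y := by
  rw [angle_smul_left_of_pos _ _ (inv_pos.mpr (norm_pos_iff.mpr hx)),
    angle_smul_right_of_pos _ _ (inv_pos.mpr (norm_pos_iff.mpr hy))]

end InnerProductGeometry

end InnerProduct

open InnerProductGeometry in
theorem stmt_4_general (A1 A2 A3 A4 A0 : EuclideanSpace ℝ (Fin 2)) (B1 B2 B3 B4 : ℝ)
    (hB1 : 0 < B1) (hB2 : 0 < B2) (hB13 : B1 = B3) (hB24 : B2 = B4)
    (h1 : A0 ≠ A1) (h2 : A0 ≠ A2) (h3 : A0 ≠ A3) (h4 : A0 ≠ A4)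
    (heq : B1 • (‖A1 - A0‖⁻¹ • (A1 - A0)) + B2 • (‖A2 - A0‖⁻¹ • (A2 - A0))
         + B3 • (‖A3 - A0‖⁻¹ • (A3 - A0)) + B4 • (‖A4 - A0‖⁻¹ • (A4 - A0)) = 0) :
    ∠ A1 A0 A2 = ∠ A3 A0 A4 ∧ ∠ A2 A0 A3 = ∠ A4 A0 A1 := by
  subst hB13 hB24
  have v1 : A1 - A0 ≠ 0 := sub_ne_zero.mpr h1.symm
  have v2 : A2 - A0 ≠ 0 := sub_ne_zero.mpr h2.symm
  have v3 : A3 - A0 ≠ 0 := sub_ne_zero.mpr h3.symm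
  have v4 : A4 - A0 ≠ 0 := sub_ne_zero.mpr h4.symm
  have unit13 : ‖‖A1 - A0‖⁻¹ • (A1 - A0)‖ = ‖‖A3 - A0‖⁻¹ • (A3 - A0)‖ := by
    simp [norm_smul, v1, v3]
  have unit24 : ‖‖A2 - A0‖⁻¹ • (A2 - A0)‖ = ‖‖A4 - A0‖⁻¹ • (A4 - A0)‖ := by
    simp [norm_smul, v2, v4]
  obtain ⟨h12, h23⟩ := inner_eq_inner_of_smul_add_add_smul_add_eq_zero hB1.ne' hB2.ne'
    unit13 unit24 (by rw [← heq]; module)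
  simp only [EuclideanGeometry.angle, vsub_eq_sub]
  rw [← angle_inv_norm_smul_inv_norm_smul v1 v2, ← angle_inv_norm_smul_inv_norm_smul v3 v4,
    ← angle_inv_norm_smul_inv_norm_smul v2 v3, ← angle_inv_norm_smul_inv_norm_smul v4 v1]
  exact ⟨angle_eq_angle_of_inner_eq unit13 unit24 h12,
    angle_eq_angle_of_inner_eq unit24 unit13.symm h23⟩

theorem stmt_4 (A1 A2 A3 A4 A0 : EuclideanSpace ℝ (Fin 2)) (B1 B2 B3 B4 : ℝ)
    (hB1 : 0 < B1) (hB2 : 0 < B2) (hB13 : B1 = B3) (hB24 : B2 = B4)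
    (hconv : ∀ P ∈ ({A1, A2, A3, A4} : Set (EuclideanSpace ℝ (Fin 2))),
      P ∉ convexHull ℝ (({A1, A2, A3, A4} : Set (EuclideanSpace ℝ (Fin 2))) \ {P}))
    (hint : A0 ∈ interior (convexHull ℝ ({A1, A2, A3, A4} : Set (EuclideanSpace ℝ (Fin 2)))))
    (h1 : A0 ≠ A1) (h2 : A0 ≠ A2) (h3 : A0 ≠ A3) (h4 : A0 ≠ A4)
    (heq : B1 • (‖A1 - A0‖⁻¹ • (A1 - A0)) + B2 • (‖A2 - A0‖⁻¹ • (A2 - A0))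
         + B3 • (‖A3 - A0‖⁻¹ • (A3 - A0)) + B4 • (‖A4 - A0‖⁻¹ • (A4 - A0)) = 0) :
    ∠ A1 A0 A2 = ∠ A3 A0 A4 ∧ ∠ A2 A0 A3 = ∠ A4 A0 A1 :=
  stmt_4_general A1 A2 A3 A4 A0 B1 B2 B3 B4 hB1 hB2 hB13 hB24 h1 h2 h3 h4 heq
end

section
/- Let a > 0 and B1 > B4 > 0, and let A0 be the weighted Fermat-Torricelli point of the square with vertices A1 = (-a/2, a/2), A2 = (a/2, a/2), A3 = (a/2, -a/2), A4 = (-a/2, -a/2) and weights B1 = B2 at A1, A2 and B3 = B4 at A3, A4. Writing α12 for the angle A1-A0-A2 and α34 for the angle A3-A0-A4, we have cos(α34/2) = (B1/B4) * cos(α12/2). -/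
/-!
At the minimiser the derivative in `y` of the weighted distance sum vanishes, which gives
`B1 (a/2 - y) / |A1 A0| = B4 (a/2 + y) / |A4 A0|`. The triangles `A1 A0 A2` and `A3 A0 A4` are
isosceles with apex `A0`, and in an isosceles triangle the median from the apex equals the leg
times the cosine of the half apex angle; these medians have lengths `|a/2 - y|` and `|a/2 + y|`.
-/

open EuclideanGeometry Real

theorem hasDerivAt_sqrt_sq_add_sub_sq {c : ℝ} (hc : c ≠ 0) (p x : ℝ) :
    HasDerivAt (fun x => √(c ^ 2 + (x - p) ^ 2)) ((x - p) / √(c ^ 2 + (x - p) ^ 2)) x := by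
  have hc2 : 0 < c ^ 2 + (x - p) ^ 2 := by positivity
  have h : HasDerivAt (fun x => c ^ 2 + (x - p) ^ 2) (2 * (x - p)) x := by
    simpa using (((hasDerivAt_id x).sub_const p).pow 2).const_add (c ^ 2)
  convert h.sqrt hc2.ne' using 1
  rw [mul_div_mul_left _ _ two_ne_zero]

theorem IsLocalMin.weighted_sum_slopes_eq_zero {c p q w₁ w₂ y : ℝ} (hc : c ≠ 0)
    (h : IsLocalMin (fun x => w₁ * √(c ^ 2 + (x - p) ^ 2) + w₂ * √(c ^ 2 + (x - q) ^ 2))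
      y) :
    w₁ * ((y - p) / √(c ^ 2 + (y - p) ^ 2)) + w₂ * ((y - q) / √(c ^ 2 + (y - q) ^ 2)) = 0 :=
  h.hasDerivAt_eq_zero <|
    ((hasDerivAt_sqrt_sq_add_sub_sq hc p y).const_mul w₁).add
      ((hasDerivAt_sqrt_sq_add_sub_sq hc q y).const_mul w₂)

namespace InnerProductGeometry

variable {V : Type*} [NormedAddCommGroup V] [InnerProductSpace ℝ V]

theorem cos_half_angle_mul_two_mul_norm_of_norm_eq {u v : V} (h : ‖u‖ = ‖v‖) :
    cos (angle u v / 2) * (2 * ‖u‖) = ‖u + v‖ := by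
  have hcos_nonneg : 0 ≤ cos (angle u v / 2) := by
    apply cos_nonneg_of_neg_pi_div_two_le_of_le <;>
      linarith [angle_nonneg u v, angle_le_pi u v, pi_pos]
  -- `‖u + v‖² = 2‖u‖² (1 + cos θ) = (2‖u‖ cos (θ/2))²`
  refine (pow_left_inj₀ (by positivity) (norm_nonneg _) two_ne_zero).mp ?_
  have hcos_sq := Real.cos_sq (angle u v / 2)
  rw [mul_div_cancel₀ _ two_ne_zero] at hcos_sq
  rw [norm_add_sq_real, ← cos_angle_mul_norm_mul_norm, ← h, mul_pow, hcos_sq]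
  ring

end InnerProductGeometry

namespace EuclideanGeometry

variable {V P : Type*} [NormedAddCommGroup V] [InnerProductSpace ℝ V] [MetricSpace P]
  [NormedAddTorsor V P]

theorem cos_half_angle_mul_dist_of_dist_eq {A B C : P} (h : dist A C = dist B C) :
    cos (∠ A C B / 2) * dist A C = dist (midpoint ℝ A B) C := by
  rw [dist_eq_norm_vsub V, dist_eq_norm_vsub V] at h
  rw [dist_eq_norm_vsub V, dist_eq_norm_vsub V, midpoint_vsub, ← smul_add, norm_smul, angle,
    ← InnerProductGeometry.cos_half_angle_mul_two_mul_norm_of_norm_eq h,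
    invOf_eq_inv, norm_inv, Real.norm_two]
  ring

end EuclideanGeometry

namespace EuclideanSpace

theorem dist_equiv_symm_fin_two (x₁ y₁ x₂ y₂ : ℝ) :
    dist ((WithLp.equiv 2 (Fin 2 → ℝ)).symm ![x₁, y₁])
        ((WithLp.equiv 2 (Fin 2 → ℝ)).symm ![x₂, y₂]) =
      √((x₁ - x₂) ^ 2 + (y₁ - y₂) ^ 2) := by
  simp [dist_eq, Fin.sum_univ_two, Real.dist_eq, sq_abs]

theorem midpoint_equiv_symm_fin_two (x₁ y₁ x₂ y₂ : ℝ) :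
    midpoint ℝ ((WithLp.equiv 2 (Fin 2 → ℝ)).symm ![x₁, y₁])
        ((WithLp.equiv 2 (Fin 2 → ℝ)).symm ![x₂, y₂]) =
      (WithLp.equiv 2 (Fin 2 → ℝ)).symm ![(x₁ + x₂) / 2, (y₁ + y₂) / 2] := by
  ext i
  fin_cases i <;> simp [midpoint_eq_smul_add] <;> ring

theorem cos_half_angle_mul_sqrt_fin_two (s t y : ℝ) :
    cos (∠ ((WithLp.equiv 2 (Fin 2 → ℝ)).symm ![-s, t])
        ((WithLp.equiv 2 (Fin 2 → ℝ)).symm ![0, y])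
        ((WithLp.equiv 2 (Fin 2 → ℝ)).symm ![s, t]) / 2) * √(s ^ 2 + (y - t) ^ 2) =
      |y - t| := by
  have h := cos_half_angle_mul_dist_of_dist_eq
    (A := (WithLp.equiv 2 (Fin 2 → ℝ)).symm ![-s, t])
    (B := (WithLp.equiv 2 (Fin 2 → ℝ)).symm ![s, t])
    (C := (WithLp.equiv 2 (Fin 2 → ℝ)).symm ![0, y])
    (by simp only [dist_equiv_symm_fin_two]; congr 1; ring)
  simp only [dist_equiv_symm_fin_two, midpoint_equiv_symm_fin_two] at h
  rwa [show (-s - 0) ^ 2 + (t - y) ^ 2 = s ^ 2 + (y - t) ^ 2 by ring,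
    show ((-s + s) / 2 - 0) ^ 2 + ((t + t) / 2 - y) ^ 2 = (y - t) ^ 2 by ring,
    sqrt_sq_eq_abs] at h

end EuclideanSpace

theorem stmt_10 (a B1 B4 y : ℝ) (ha : 0 < a) (h14 : B4 < B1) (h4 : 0 < B4)
    (hmin : ∀ x : ℝ,
      B1 * Real.sqrt ((a/2)^2 + (a/2 - y)^2) + B4 * Real.sqrt ((a/2)^2 + (a/2 + y)^2) ≤
      B1 * Real.sqrt ((a/2)^2 + (a/2 - x)^2) + B4 * Real.sqrt ((a/2)^2 + (a/2 + x)^2)) :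
    let A1 : EuclideanSpace ℝ (Fin 2) := (WithLp.equiv 2 (Fin 2 → ℝ)).symm ![-(a/2), a/2]
    let A2 : EuclideanSpace ℝ (Fin 2) := (WithLp.equiv 2 (Fin 2 → ℝ)).symm ![a/2, a/2]
    let A3 : EuclideanSpace ℝ (Fin 2) := (WithLp.equiv 2 (Fin 2 → ℝ)).symm ![a/2, -(a/2)]
    let A4 : EuclideanSpace ℝ (Fin 2) := (WithLp.equiv 2 (Fin 2 → ℝ)).symm ![-(a/2), -(a/2)]
    let A0 : EuclideanSpace ℝ (Fin 2) := (WithLp.equiv 2 (Fin 2 → ℝ)).symm ![0, y]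
    Real.cos (∠ A3 A0 A4 / 2) = (B1 / B4) * Real.cos (∠ A1 A0 A2 / 2) := by
  intro A1 A2 A3 A4 A0
  have hsq₁ (x : ℝ) : (a / 2 - x) ^ 2 = (x - a / 2) ^ 2 := by ring
  have hsq₄ (x : ℝ) : (a / 2 + x) ^ 2 = (x - -(a / 2)) ^ 2 := by ring
  simp only [hsq₁, hsq₄] at hmin
  have hcrit := IsLocalMin.weighted_sum_slopes_eq_zero (half_pos ha).ne' (w₁ := B1) (w₂ := B4)
    (Filter.Eventually.of_forall hmin)
  have h12 := EuclideanSpace.cos_half_angle_mul_sqrt_fin_two (a / 2) (a / 2) y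
  have h34 := EuclideanSpace.cos_half_angle_mul_sqrt_fin_two (a / 2) (-(a / 2)) y
  rw [angle_comm] at h34
  have hr₁ : 0 < √((a / 2) ^ 2 + (y - a / 2) ^ 2) := sqrt_pos.mpr (by positivity)
  have hr₄ : 0 < √((a / 2) ^ 2 + (y - -(a / 2)) ^ 2) := sqrt_pos.mpr (by positivity)
  -- Taking absolute values spares us locating `y` in `(-a/2, a/2)`.
  have hbalance := congrArg abs (eq_neg_of_add_eq_zero_right hcrit)
  simp only [abs_neg, abs_mul, abs_div, abs_of_pos (h4.trans h14), abs_of_pos h4,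
    abs_of_pos hr₁, abs_of_pos hr₄, ← h12, ← h34, mul_div_cancel_right₀ _ hr₁.ne',
    mul_div_cancel_right₀ _ hr₄.ne'] at hbalance
  rw [div_mul_eq_mul_div, eq_div_iff h4.ne', mul_comm, hbalance]
end

section
/- Let A1, A2, A3, A4 be four non-collinear points in the plane and let A0 be a point distinct from all of them such that B1*u(A0,A1) + B2*u(A0,A2) + B3*u(A0,A3) + B4*u(A0,A4) = 0 for positive weights Bi. Then A0 is also the unique minimizer of X ↦ Σ Bi*|X - Ai'| for any choice of points Ai' on the open rays from A0 through Ai (i.e., Ai' = A0 + ti*(Ai - A0) with ti > 0). -/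
open Finset RealInnerProductSpace

theorem stmt_13 (A : Fin 4 → EuclideanSpace ℝ (Fin 2)) (A0 : EuclideanSpace ℝ (Fin 2))
    (B : Fin 4 → ℝ) (hB : ∀ i, 0 < B i)
    (hncol : ¬ Collinear ℝ (Set.range A))
    (hne : ∀ i, A0 ≠ A i)
    (heq : ∑ i, B i • (‖A i - A0‖⁻¹ • (A i - A0)) = 0)
    (A' : Fin 4 → EuclideanSpace ℝ (Fin 2)) (t : Fin 4 → ℝ) (ht : ∀ i, 0 < t i)
    (hA' : ∀ i, A' i = A0 + t i • (A i - A0)) :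
    (∀ X : EuclideanSpace ℝ (Fin 2), (∑ i, B i * ‖A0 - A' i‖) ≤ ∑ i, B i * ‖X - A' i‖) ∧
    (∀ X : EuclideanSpace ℝ (Fin 2),
      (∀ Y : EuclideanSpace ℝ (Fin 2), (∑ i, B i * ‖X - A' i‖) ≤ ∑ i, B i * ‖Y - A' i‖) →
      X = A0) := by
  have hnpos : ∀ i, (0:ℝ) < ‖A i - A0‖ := fun i =>
    norm_pos_iff.mpr (sub_ne_zero.mpr (Ne.symm (hne i)))
  set u : Fin 4 → EuclideanSpace ℝ (Fin 2) := fun i => ‖A i - A0‖⁻¹ • (A i - A0) with hu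
  have hu1 : ∀ i, ‖u i‖ = 1 := fun i => by
    simp [hu, norm_smul, abs_of_pos (inv_pos.mpr (hnpos i)),
      inv_mul_cancel₀ (hnpos i).ne']
  have hAu : ∀ i, A i - A0 = ‖A i - A0‖ • u i := fun i => by
    rw [hu]; simp [smul_smul, mul_inv_cancel₀ (hnpos i).ne']
  have hA'sub : ∀ i, A' i - A0 = (t i * ‖A i - A0‖) • u i := fun i => by
    rw [hA' i, add_sub_cancel_left, hu]
    rw [smul_smul, mul_assoc, mul_inv_cancel₀ (hnpos i).ne', mul_one]
  have hnA' : ∀ i, ‖A0 - A' i‖ = t i * ‖A i - A0‖ := fun i => by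
    rw [norm_sub_rev, hA'sub i, norm_smul, hu1, mul_one, Real.norm_eq_abs,
      abs_of_pos (mul_pos (ht i) (hnpos i))]
  have hinner : ∀ i, ⟪u i, A' i - A0⟫ = ‖A0 - A' i‖ := fun i => by
    rw [hA'sub i, hnA' i, real_inner_smul_right, real_inner_self_eq_norm_sq, hu1]
    ring
  have hsplit : ∀ (X : EuclideanSpace ℝ (Fin 2)) i,
      ⟪u i, A' i - X⟫ = ‖A0 - A' i‖ + ⟪u i, A0 - X⟫ := by
    intro X i
    rw [← hinner i, ← inner_add_right]
    congr 1
    abel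
  have key : ∀ (X : EuclideanSpace ℝ (Fin 2)) i,
      ‖A0 - A' i‖ + ⟪u i, A0 - X⟫ ≤ ‖X - A' i‖ := by
    intro X i
    have h1 : ⟪u i, A' i - X⟫ ≤ ‖X - A' i‖ := by
      calc ⟪u i, A' i - X⟫ ≤ ‖u i‖ * ‖A' i - X‖ := real_inner_le_norm _ _
        _ = ‖X - A' i‖ := by rw [hu1, one_mul, norm_sub_rev]
    linarith [hsplit X i]
  have hsum0 : ∀ X : EuclideanSpace ℝ (Fin 2),
      ∑ i, B i * ⟪u i, A0 - X⟫ = 0 := by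
    intro X
    have h : ∑ i, B i * ⟪u i, A0 - X⟫ = ⟪∑ i, B i • u i, A0 - X⟫ := by
      rw [sum_inner]
      exact (Finset.sum_congr rfl fun i _ => real_inner_smul_left _ _ _).symm
    rw [h, heq, inner_zero_left]
  have hsumeq : ∀ X : EuclideanSpace ℝ (Fin 2),
      ∑ i, B i * ‖A0 - A' i‖ = ∑ i, B i * (‖A0 - A' i‖ + ⟪u i, A0 - X⟫) := by
    intro X
    simp_rw [mul_add]
    rw [Finset.sum_add_distrib, hsum0 X, add_zero]
  have main1 : ∀ X : EuclideanSpace ℝ (Fin 2),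
      (∑ i, B i * ‖A0 - A' i‖) ≤ ∑ i, B i * ‖X - A' i‖ := by
    intro X
    rw [hsumeq X]
    exact sum_le_sum fun i _ => mul_le_mul_of_nonneg_left (key X i) (hB i).le
  refine ⟨main1, ?_⟩
  intro X hX
  by_contra hXA0
  have hXne : X - A0 ≠ 0 := sub_ne_zero.mpr hXA0
  have hfe : ∑ i, B i * (‖A0 - A' i‖ + ⟪u i, A0 - X⟫) = ∑ i, B i * ‖X - A' i‖ := by
    rw [← hsumeq X]
    exact le_antisymm (main1 X) (hX A0)
  have hterm : ∀ i ∈ (univ : Finset (Fin 4)),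
      B i * (‖A0 - A' i‖ + ⟪u i, A0 - X⟫) = B i * ‖X - A' i‖ :=
    (Finset.sum_eq_sum_iff_of_le
      (fun i _ => mul_le_mul_of_nonneg_left (key X i) (hB i).le)).mp hfe
  -- each i: equality in Cauchy-Schwarz
  have hline : ∀ i, ∃ s : ℝ, s ≠ 0 ∧ X - A0 = s • u i := by
    intro i
    have h1 : ‖A0 - A' i‖ + ⟪u i, A0 - X⟫ = ‖X - A' i‖ :=
      mul_left_cancel₀ (hB i).ne' (hterm i (mem_univ i))
    have hcs : ⟪u i, A' i - X⟫ = ‖u i‖ * ‖A' i - X‖ := by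
      rw [hsplit X i, h1, hu1, one_mul, norm_sub_rev]
    have h2 := inner_eq_norm_mul_iff_real.mp hcs
    rw [hu1, one_smul] at h2
    set c := ‖A' i - X‖ with hc
    have hX0 : X - A0 = (t i * ‖A i - A0‖ - c) • u i := by
      calc X - A0 = (A' i - A0) - (A' i - X) := by abel
        _ = (t i * ‖A i - A0‖) • u i - c • u i := by rw [hA'sub i, h2]
        _ = (t i * ‖A i - A0‖ - c) • u i := (sub_smul _ _ _).symm
    refine ⟨_, ?_, hX0⟩
    intro hs
    rw [hs, zero_smul] at hX0
    exact hXne hX0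
  apply hncol
  rw [collinear_iff_exists_forall_eq_smul_vadd]
  refine ⟨A0, X - A0, ?_⟩
  rintro p ⟨i, rfl⟩
  obtain ⟨s, hs0, hs⟩ := hline i
  refine ⟨‖A i - A0‖ * s⁻¹, ?_⟩
  have hui : u i = s⁻¹ • (X - A0) := by
    rw [hs, smul_smul, inv_mul_cancel₀ hs0, one_smul]
  have : A i - A0 = (‖A i - A0‖ * s⁻¹) • (X - A0) :=
    calc A i - A0 = ‖A i - A0‖ • u i := hAu i
      _ = ‖A i - A0‖ • (s⁻¹ • (X - A0)) := by rw [hui]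
      _ = (‖A i - A0‖ * s⁻¹) • (X - A0) := smul_smul _ _ _
  rw [vadd_eq_add, ← this]
  abel
end

section
/- Let a > 0 and B1 > B4 > 0. The quartic polynomial P(y) = 8(B1^2 - B4^2)y^4 - 2a^2(B1^2 - B4^2)y^2 - 2a^3(B1^2 + B4^2)y + a^4(B1^2 - B4^2) has exactly one real root in the open interval (0, a/2). -/
theorem stmt_15 (a B1 B4 : ℝ) (ha : 0 < a) (h14 : B4 < B1) (h4 : 0 < B4) :
    ∃! y : ℝ, y ∈ Set.Ioo 0 (a/2) ∧
      8*(B1^2 - B4^2)*y^4 - 2*a^2*(B1^2 - B4^2)*y^2 - 2*a^3*(B1^2 + B4^2)*y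
        + a^4*(B1^2 - B4^2) = 0 := by
  set f : ℝ → ℝ := fun y =>
    8*(B1^2 - B4^2)*y^4 - 2*a^2*(B1^2 - B4^2)*y^2 - 2*a^3*(B1^2 + B4^2)*y
      + a^4*(B1^2 - B4^2) with hf
  have hC : (0:ℝ) < B1^2 - B4^2 := by nlinarith
  have hcont : ContinuousOn f (Set.Icc 0 (a/2)) := by
    apply Continuous.continuousOn; fun_prop
  have hfa : f (a/2) < 0 := by
    simp only [hf]
    have : 8*(B1^2 - B4^2)*(a/2)^4 - 2*a^2*(B1^2 - B4^2)*(a/2)^2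
        - 2*a^3*(B1^2 + B4^2)*(a/2) + a^4*(B1^2 - B4^2) = -2*a^4*B4^2 := by ring
    rw [this]
    nlinarith [mul_pos (pow_pos ha 4) (pow_pos h4 2)]
  have hf0 : 0 < f 0 := by
    simp only [hf]
    nlinarith [pow_pos ha 4]
  have hsub := intermediate_value_Ioo' (by linarith : (0:ℝ) ≤ a/2) hcont
  have h0mem : (0:ℝ) ∈ Set.Ioo (f (a/2)) (f 0) := ⟨hfa, hf0⟩
  obtain ⟨y, hy, hyf⟩ := hsub h0mem
  refine ⟨y, ⟨hy, hyf⟩, ?_⟩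
  rintro z ⟨⟨hz0, hz2⟩, hzf⟩
  obtain ⟨hy0, hy2⟩ := hy
  -- uniqueness: f strictly decreasing on (0, a/2)
  by_contra hne
  have hs : z + y < a := by linarith
  have hspos : (0:ℝ) < z + y := by linarith
  have hD : (0:ℝ) < 2*a^3*(B1^2 + B4^2) := by positivity
  have hQ : 2*(B1^2 - B4^2)*(z + y)*(4*(z^2 + y^2) - a^2) - 2*a^3*(B1^2 + B4^2) < 0 := by
    rcases le_or_gt (4*(z^2 + y^2) - a^2) 0 with ht | ht
    · have h1 : 2*(B1^2 - B4^2)*(z + y)*(4*(z^2 + y^2) - a^2) ≤ 0 :=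
        mul_nonpos_of_nonneg_of_nonpos (by positivity) ht
      linarith
    · have hq : 4*(z^2 + y^2) - a^2 < a^2 := by nlinarith
      have h1 : (z + y) * (4*(z^2 + y^2) - a^2) < a * a^2 :=
        mul_lt_mul'' hs hq (le_of_lt hspos) (le_of_lt ht)
      have h2 : 2*(B1^2 - B4^2) * ((z + y) * (4*(z^2 + y^2) - a^2))
          < 2*(B1^2 - B4^2) * (a * a^2) := by
        exact mul_lt_mul_of_pos_left h1 (by linarith)
      nlinarith [mul_pos (pow_pos ha 3) (pow_pos h4 2)]
  have hdiff : (z - y) *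
      (2*(B1^2 - B4^2)*(z + y)*(4*(z^2 + y^2) - a^2) - 2*a^3*(B1^2 + B4^2)) = 0 := by
    have := hyf
    simp only [hf] at this
    nlinarith [hzf, this]
  have hzy : z - y ≠ 0 := sub_ne_zero.mpr hne
  have := mul_eq_zero.mp hdiff
  rcases this with h | h
  · exact hzy h
  · linarith
end
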